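/- arXiv:1911.10556 — 3 statements merged into one kernel-verified Lean document; each statement's English description precedes it below -/
import Mathlib

section
/- Let d₁,…,d_n > 0 and h₁,…,h_n real (not all zero), and define f(b) = (Σₙ hₙ²dₙ/(1+b dₙ)²) / (Σₙ hₙ²/(1+b dₙ))² for b ≥ 0. Then f is monotonically non-increasing on [0,∞); it is strictly decreasing unless all dₙ with hₙ ≠ 0 are equal. -/
lemma lagrange_aux {n : ℕ} (v u : Fin n → ℝ) :
    2 * ((∑ i, v i * u i ^ 2) * (∑ i, v i) - (∑ i, v i * u i) ^ 2)
      = ∑ i, ∑ j, v i * v j * (u i - u j) ^ 2 := by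
  have e1 : (∑ i, v i * u i ^ 2) * (∑ j, v j) = ∑ i, ∑ j, (v i * u i ^ 2) * v j :=
    Finset.sum_mul_sum _ _ _ _
  have e2 : (∑ i, v i * u i) ^ 2 = ∑ i, ∑ j, (v i * u i) * (v j * u j) := by
    rw [sq]; exact Finset.sum_mul_sum _ _ _ _
  have e3 : (∑ i, v i) * (∑ j, v j * u j ^ 2) = ∑ i, ∑ j, v i * (v j * u j ^ 2) :=
    Finset.sum_mul_sum _ _ _ _
  calc 2 * ((∑ i, v i * u i ^ 2) * (∑ i, v i) - (∑ i, v i * u i) ^ 2)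
      = (∑ i, v i * u i ^ 2) * (∑ i, v i) + (∑ i, v i) * (∑ j, v j * u j ^ 2)
        - 2 * (∑ i, v i * u i) ^ 2 := by ring
    _ = (∑ i, ∑ j, (v i * u i ^ 2) * v j) + (∑ i, ∑ j, v i * (v j * u j ^ 2))
        - 2 * (∑ i, ∑ j, (v i * u i) * (v j * u j)) := by rw [e1, e2, e3]
    _ = ∑ i, ∑ j, ((v i * u i ^ 2) * v j + v i * (v j * u j ^ 2) - 2 * ((v i * u i) * (v j * u j))) := by
        simp [Finset.sum_add_distrib, Finset.sum_sub_distrib, Finset.mul_sum]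
    _ = ∑ i, ∑ j, v i * v j * (u i - u j) ^ 2 :=
        Finset.sum_congr rfl fun i _ => Finset.sum_congr rfl fun j _ => by ring

lemma sar_hasDerivAt {n : ℕ} (d h : Fin n → ℝ) (hd : ∀ i, 0 < d i) (b : ℝ) (hb : 0 ≤ b)
    (hD : (∑ i, h i ^ 2 / (1 + b * d i)) ≠ 0) :
    HasDerivAt (fun b => (∑ i, h i ^ 2 * d i / (1 + b * d i) ^ 2) /
        (∑ i, h i ^ 2 / (1 + b * d i)) ^ 2)
      (2 * ((∑ i, h i ^ 2 * d i / (1 + b * d i) ^ 2) ^ 2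
            - (∑ i, h i ^ 2 * d i ^ 2 / (1 + b * d i) ^ 3) * (∑ i, h i ^ 2 / (1 + b * d i)))
        / (∑ i, h i ^ 2 / (1 + b * d i)) ^ 3) b := by
  have hc : ∀ i, (0:ℝ) < 1 + b * d i := fun i =>
    add_pos_of_pos_of_nonneg one_pos (mul_nonneg hb (hd i).le)
  have hg : ∀ i, HasDerivAt (fun b => 1 + b * d i) (d i) b := fun i => by
    simpa using ((hasDerivAt_id b).mul_const (d i)).const_add 1
  have hDd : HasDerivAt (fun b => ∑ i, h i ^ 2 / (1 + b * d i))
      (-(∑ i, h i ^ 2 * d i / (1 + b * d i) ^ 2)) b := by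
    rw [← Finset.sum_neg_distrib]
    refine HasDerivAt.fun_sum fun i _ => ?_
    have := (hasDerivAt_const b (h i ^ 2)).fun_div (hg i) (hc i).ne'
    refine this.congr_deriv ?_
    field_simp
    ring
  have hNd : HasDerivAt (fun b => ∑ i, h i ^ 2 * d i / (1 + b * d i) ^ 2)
      (-(2 * ∑ i, h i ^ 2 * d i ^ 2 / (1 + b * d i) ^ 3)) b := by
    rw [Finset.mul_sum, ← Finset.sum_neg_distrib]
    refine HasDerivAt.fun_sum fun i _ => ?_
    have := (hasDerivAt_const b (h i ^ 2 * d i)).fun_div ((hg i).fun_pow 2)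
      (pow_ne_zero 2 (hc i).ne')
    refine this.congr_deriv ?_
    have h1 : (1 + b * d i) ≠ 0 := (hc i).ne'
    field_simp
    ring
  have := hNd.fun_div (hDd.fun_pow 2) (pow_ne_zero 2 hD)
  refine this.congr_deriv ?_
  rw [div_eq_div_iff (pow_ne_zero 2 (pow_ne_zero 2 hD)) (pow_ne_zero 3 hD)]
  simp only [Nat.cast_ofNat, show (2:ℕ) - 1 = 1 from rfl, pow_one]
  ring

theorem sar_function_monotone
    (n : ℕ) (d h : Fin n → ℝ) (hd : ∀ i, 0 < d i) (hh : ∃ i, h i ≠ 0)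
    (f : ℝ → ℝ)
    (hf : ∀ b, f b = (∑ i, h i ^ 2 * d i / (1 + b * d i) ^ 2) /
        (∑ i, h i ^ 2 / (1 + b * d i)) ^ 2) :
    (∀ a b : ℝ, 0 ≤ a → a ≤ b → f b ≤ f a) ∧
    ((¬ ∀ i j, h i ≠ 0 → h j ≠ 0 → d i = d j) →
      ∀ a b : ℝ, 0 ≤ a → a < b → f b < f a) := by
  have hfg : f = fun b => (∑ i, h i ^ 2 * d i / (1 + b * d i) ^ 2) /
      (∑ i, h i ^ 2 / (1 + b * d i)) ^ 2 := funext hf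
  subst hfg
  set g : ℝ → ℝ := fun b => (∑ i, h i ^ 2 * d i / (1 + b * d i) ^ 2) /
      (∑ i, h i ^ 2 / (1 + b * d i)) ^ 2 with hg
  obtain ⟨i₀, hi₀⟩ := hh
  -- positivity of c and D
  have hc : ∀ b : ℝ, 0 ≤ b → ∀ i, (0:ℝ) < 1 + b * d i := fun b hb i =>
    add_pos_of_pos_of_nonneg one_pos (mul_nonneg hb (hd i).le)
  have hDpos : ∀ b : ℝ, 0 ≤ b → 0 < ∑ i, h i ^ 2 / (1 + b * d i) := by
    intro b hb
    refine Finset.sum_pos' (fun i _ => div_nonneg (sq_nonneg _) (hc b hb i).le)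
      ⟨i₀, Finset.mem_univ _, div_pos (by positivity) (hc b hb i₀)⟩
  -- rewriting the three sums with v, u
  have hsum : ∀ b : ℝ, 0 ≤ b →
      (∑ i, (h i ^ 2 / (1 + b * d i)) * (d i / (1 + b * d i)) ^ 2)
          = (∑ i, h i ^ 2 * d i ^ 2 / (1 + b * d i) ^ 3) ∧
      (∑ i, (h i ^ 2 / (1 + b * d i)) * (d i / (1 + b * d i)))
          = (∑ i, h i ^ 2 * d i / (1 + b * d i) ^ 2) := by
    intro b hb
    constructor <;> refine Finset.sum_congr rfl fun i _ => ?_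
    · rw [div_pow, div_mul_div_comm]
      congr 1
      ring
    · rw [div_mul_div_comm]
      congr 1
      ring
  -- main inequality : N^2 ≤ M * D, strict in the nondegenerate case
  have key : ∀ b : ℝ, 0 ≤ b →
      (∑ i, h i ^ 2 * d i / (1 + b * d i) ^ 2) ^ 2
        ≤ (∑ i, h i ^ 2 * d i ^ 2 / (1 + b * d i) ^ 3) * (∑ i, h i ^ 2 / (1 + b * d i)) := by
    intro b hb
    set v : Fin n → ℝ := fun i => h i ^ 2 / (1 + b * d i)
    set u : Fin n → ℝ := fun i => d i / (1 + b * d i)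
    obtain ⟨e1, e2⟩ := hsum b hb
    have := lagrange_aux v u
    rw [e1, e2] at this
    nlinarith [Finset.sum_nonneg (fun i (_ : i ∈ Finset.univ) =>
      Finset.sum_nonneg (fun j (_ : j ∈ Finset.univ) =>
        mul_nonneg (mul_nonneg (div_nonneg (sq_nonneg (h i)) (hc b hb i).le)
          (div_nonneg (sq_nonneg (h j)) (hc b hb j).le)) (sq_nonneg (u i - u j))))]
  have keys : (¬ ∀ i j, h i ≠ 0 → h j ≠ 0 → d i = d j) → ∀ b : ℝ, 0 ≤ b →
      (∑ i, h i ^ 2 * d i / (1 + b * d i) ^ 2) ^ 2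
        < (∑ i, h i ^ 2 * d i ^ 2 / (1 + b * d i) ^ 3) * (∑ i, h i ^ 2 / (1 + b * d i)) := by
    intro hne b hb
    push_neg at hne
    obtain ⟨i₁, j₁, hhi, hhj, hdij⟩ := hne
    set v : Fin n → ℝ := fun i => h i ^ 2 / (1 + b * d i) with hv
    set u : Fin n → ℝ := fun i => d i / (1 + b * d i) with hu
    obtain ⟨e1, e2⟩ := hsum b hb
    have hlag := lagrange_aux v u
    rw [e1, e2] at hlag
    have hterm : ∀ i j, 0 ≤ v i * v j * (u i - u j) ^ 2 := fun i j =>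
      mul_nonneg (mul_nonneg (div_nonneg (sq_nonneg (h i)) (hc b hb i).le)
        (div_nonneg (sq_nonneg (h j)) (hc b hb j).le)) (sq_nonneg _)
    have huij : u i₁ ≠ u j₁ := by
      simp only [hu]
      intro hEq
      rw [div_eq_div_iff (hc b hb i₁).ne' (hc b hb j₁).ne'] at hEq
      apply hdij
      nlinarith [hEq]
    have hpos : 0 < ∑ i, ∑ j, v i * v j * (u i - u j) ^ 2 := by
      refine Finset.sum_pos' (fun i _ => Finset.sum_nonneg fun j _ => hterm i j)
        ⟨i₁, Finset.mem_univ _, ?_⟩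
      refine Finset.sum_pos' (fun j _ => hterm i₁ j) ⟨j₁, Finset.mem_univ _, ?_⟩
      have hvi : 0 < v i₁ := div_pos (by positivity) (hc b hb i₁)
      have hvj : 0 < v j₁ := div_pos (by positivity) (hc b hb j₁)
      exact mul_pos (mul_pos hvi hvj) (pow_two_pos_of_ne_zero (sub_ne_zero.mpr huij))
    nlinarith [hpos, hlag]
  -- monotonicity via derivative
  have hanti : AntitoneOn g (Set.Ici 0) := by
    refine antitoneOn_of_deriv_nonpos (convex_Ici 0) ?_ ?_ ?_
    · intro x hx
      exact (sar_hasDerivAt d h hd x hx (hDpos x hx).ne').continuousAt.continuousWithinAt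
    · intro x hx
      rw [interior_Ici] at hx
      exact (sar_hasDerivAt d h hd x hx.le (hDpos x hx.le).ne').differentiableAt.differentiableWithinAt
    · intro x hx
      rw [interior_Ici] at hx
      rw [(sar_hasDerivAt d h hd x hx.le (hDpos x hx.le).ne').deriv]
      apply div_nonpos_of_nonpos_of_nonneg
      · nlinarith [key x hx.le]
      · exact (pow_pos (hDpos x hx.le) 3).le
  constructor
  · intro a b ha hab
    exact hanti ha (le_trans ha hab) hab
  · intro hne
    have hstrict : StrictAntiOn g (Set.Ici 0) := by
      refine strictAntiOn_of_deriv_neg (convex_Ici 0) ?_ ?_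
      · intro x hx
        exact (sar_hasDerivAt d h hd x hx (hDpos x hx).ne').continuousAt.continuousWithinAt
      · intro x hx
        rw [interior_Ici] at hx
        rw [(sar_hasDerivAt d h hd x hx.le (hDpos x hx.le).ne').deriv]
        apply div_neg_of_neg_of_pos
        · nlinarith [keys hne x hx.le]
        · exact pow_pos (hDpos x hx.le) 3
    intro a b ha hab
    exact hstrict ha (le_trans ha hab.le) hab
end

section
/- Let d₁,…,d_n > 0 and h₁,…,h_n ≥ 0 not all zero. Then for all b ≥ 0, (Σₙ hₙ²dₙ/(1+b dₙ)²) / (Σₙ hₙ²/(1+b dₙ))² ≥ 1/(Σₙ hₙ²/dₙ), with the limit as b → ∞ equal to 1/(Σₙ hₙ²/dₙ). -/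
/-!
Write `a = h²`, `N(b) = ∑ a d / (1 + b d)²`, `D(b) = ∑ a / (1 + b d)` and `S = ∑ a / d`.
The lower bound `D² ≤ N S` is Cauchy–Schwarz, after splitting
`a / (1 + b d) = √(a d) / (1 + b d) · √(a / d)`.
For the limit, multiply numerator and denominator by `b²`: since `b / (1 + b d) → 1 / d`,
`b² N(b) → S` and `b D(b) → S`, so `N / D² → S / S² = 1 / S`.
-/

open Filter Topology Finset

theorem tendsto_div_one_add_mul_atTop {c : ℝ} (hc : c ≠ 0) :
    Tendsto (fun b : ℝ => b / (1 + b * c)) atTop (𝓝 c⁻¹) := by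
  have hlim : Tendsto (fun b : ℝ => (b⁻¹ + c)⁻¹) atTop (𝓝 c⁻¹) := by
    simpa using (tendsto_inv_atTop_zero.add_const c).inv₀ (by simpa using hc)
  refine hlim.congr' ?_
  filter_upwards [eventually_ne_atTop 0] with b hb
  rw [show b⁻¹ + c = (1 + b * c) / b by field_simp, inv_div]

section SarFunction

variable {ι : Type*} [Fintype ι]

theorem sq_sum_div_le_sum_mul_div_sq_mul_sum_div {a c d : ι → ℝ} (ha : ∀ i, 0 ≤ a i)
    (hd : ∀ i, 0 < d i) :
    (∑ i, a i / c i) ^ 2 ≤ (∑ i, a i * d i / c i ^ 2) * ∑ i, a i / d i :=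
  sum_sq_le_sum_mul_sum_of_sq_le_mul _
    (fun i _ => div_nonneg (mul_nonneg (ha i) (hd i).le) (sq_nonneg _))
    (fun i _ => div_nonneg (ha i) (hd i).le)
    (fun i _ => le_of_eq <| by field_simp [(hd i).ne'])

theorem sum_div_pos {a c : ι → ℝ} (ha : ∀ i, 0 ≤ a i) (hc : ∀ i, 0 < c i)
    (hpos : ∃ i, 0 < a i) : 0 < ∑ i, a i / c i :=
  let ⟨j, hj⟩ := hpos
  sum_pos' (fun i _ => div_nonneg (ha i) (hc i).le) ⟨j, mem_univ j, div_pos hj (hc j)⟩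

/-- The paper's `f(b)`, with weights `a = h²`. -/
noncomputable def sarFunction (a d : ι → ℝ) (b : ℝ) : ℝ :=
  (∑ i, a i * d i / (1 + b * d i) ^ 2) / (∑ i, a i / (1 + b * d i)) ^ 2

theorem sarFunction_eq_of_ne_zero (a d : ι → ℝ) {b : ℝ} (hb : b ≠ 0) :
    sarFunction a d b =
      (∑ i, a i * d i * (b / (1 + b * d i)) ^ 2) / (∑ i, a i * (b / (1 + b * d i))) ^ 2 := by
  have hnum : ∑ i, a i * d i * (b / (1 + b * d i)) ^ 2
      = b ^ 2 * ∑ i, a i * d i / (1 + b * d i) ^ 2 := by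
    rw [mul_sum]
    exact sum_congr rfl fun i _ => by rw [div_pow]; ring
  have hden : ∑ i, a i * (b / (1 + b * d i)) = b * ∑ i, a i / (1 + b * d i) := by
    rw [mul_sum]
    exact sum_congr rfl fun i _ => by ring
  rw [hnum, hden, mul_pow, mul_div_mul_left _ _ (pow_ne_zero 2 hb), sarFunction]

variable {a d : ι → ℝ}

theorem inv_sum_div_le_sarFunction (ha : ∀ i, 0 ≤ a i) (hd : ∀ i, 0 < d i)
    (hpos : ∃ i, 0 < a i) {b : ℝ} (hb : 0 ≤ b) :
    (∑ i, a i / d i)⁻¹ ≤ sarFunction a d b := by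
  have hc : ∀ i, 0 < 1 + b * d i := fun i => by have := hd i; positivity
  have hD := sum_div_pos ha hc hpos
  rw [sarFunction, inv_eq_one_div, div_le_div_iff₀ (sum_div_pos ha hd hpos) (by positivity),
    one_mul]
  exact sq_sum_div_le_sum_mul_div_sq_mul_sum_div ha hd

theorem tendsto_sarFunction_atTop (hd : ∀ i, d i ≠ 0) (hS : ∑ i, a i / d i ≠ 0) :
    Tendsto (sarFunction a d) atTop (𝓝 (∑ i, a i / d i)⁻¹) := by
  have hlim i := tendsto_div_one_add_mul_atTop (hd i)
  have hnum : Tendsto (fun b => ∑ i, a i * d i * (b / (1 + b * d i)) ^ 2) atTop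
      (𝓝 (∑ i, a i / d i)) := by
    have hval : ∑ i, a i * d i * (d i)⁻¹ ^ 2 = ∑ i, a i / d i :=
      sum_congr rfl fun i _ => by field_simp [hd i]
    rw [← hval]
    exact tendsto_finsetSum _ fun i _ => ((hlim i).pow 2).const_mul (a i * d i)
  have hden : Tendsto (fun b => ∑ i, a i * (b / (1 + b * d i))) atTop
      (𝓝 (∑ i, a i / d i)) := by
    simpa only [div_eq_mul_inv] using tendsto_finsetSum _ fun i _ => (hlim i).const_mul (a i)
  have hquot := hnum.div (hden.pow 2) (pow_ne_zero 2 hS)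
  rw [sq, ← div_div, div_self hS, one_div] at hquot
  refine hquot.congr' ?_
  filter_upwards [eventually_ne_atTop 0] with b hb
  exact (sarFunction_eq_of_ne_zero a d hb).symm

end SarFunction

theorem sar_function_infimum_general
    (n : ℕ) (d h : Fin n → ℝ) (hd : ∀ i, 0 < d i)
    (hne : ∃ i, h i ≠ 0)
    (f : ℝ → ℝ)
    (hf : ∀ b, f b = (∑ i, h i ^ 2 * d i / (1 + b * d i) ^ 2) /
        (∑ i, h i ^ 2 / (1 + b * d i)) ^ 2) :
    (∀ b : ℝ, 0 ≤ b → 1 / (∑ i, h i ^ 2 / d i) ≤ f b) ∧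
    Filter.Tendsto f Filter.atTop (nhds (1 / (∑ i, h i ^ 2 / d i))) := by
  have hf' : f = sarFunction (fun i => h i ^ 2) d := funext hf
  have ha : ∀ i, 0 ≤ h i ^ 2 := fun i => sq_nonneg _
  have hpos : ∃ i, 0 < h i ^ 2 := hne.imp fun i hi => by positivity
  rw [hf', one_div]
  exact ⟨fun b hb => inv_sum_div_le_sarFunction ha hd hpos hb,
    tendsto_sarFunction_atTop (fun i => (hd i).ne') (sum_div_pos ha hd hpos).ne'⟩

theorem sar_function_infimum
    (n : ℕ) (d h : Fin n → ℝ) (hd : ∀ i, 0 < d i) (hh : ∀ i, 0 ≤ h i)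
    (hne : ∃ i, h i ≠ 0)
    (f : ℝ → ℝ)
    (hf : ∀ b, f b = (∑ i, h i ^ 2 * d i / (1 + b * d i) ^ 2) /
        (∑ i, h i ^ 2 / (1 + b * d i)) ^ 2) :
    (∀ b : ℝ, 0 ≤ b → 1 / (∑ i, h i ^ 2 / d i) ≤ f b) ∧
    Filter.Tendsto f Filter.atTop (nhds (1 / (∑ i, h i ^ 2 / d i))) :=
  sar_function_infimum_general n d h hd hne f hf
end

section
/- Let Â and W̄ be Hermitian positive semidefinite n×n matrices, τ ≥ 0, P ∈ ℝ. Then trace((Â + Δ)W̄) ≤ P holds for all Hermitian Δ with ‖Δ‖_F ≤ τ if and only if trace(ÂW̄) + τ‖W̄‖_F ≤ P. -/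
open Matrix ComplexOrder

noncomputable def frobNorm {n : ℕ} (M : Matrix (Fin n) (Fin n) ℂ) : ℝ :=
  Real.sqrt (∑ i, ∑ j, ‖M i j‖ ^ 2)

lemma frobNorm_nonneg {n : ℕ} (M : Matrix (Fin n) (Fin n) ℂ) : 0 ≤ frobNorm M :=
  Real.sqrt_nonneg _

lemma trace_re_eq {n : ℕ} (M N : Matrix (Fin n) (Fin n) ℂ) (hN : N.IsHermitian) :
    ((M * N).trace).re = ∑ i, ∑ j, (M i j * (starRingEnd ℂ) (N i j)).re := by
  rw [Matrix.trace]
  simp only [Matrix.diag, Matrix.mul_apply, Complex.re_sum]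
  refine Finset.sum_congr rfl fun i _ => Finset.sum_congr rfl fun j _ => ?_
  rw [← hN.apply j i]
  rfl

lemma cs_bound {n : ℕ} (M N : Matrix (Fin n) (Fin n) ℂ) (hN : N.IsHermitian) :
    ((M * N).trace).re ≤ frobNorm M * frobNorm N := by
  rw [trace_re_eq M N hN]
  calc ∑ i, ∑ j, (M i j * (starRingEnd ℂ) (N i j)).re
      ≤ ∑ i, ∑ j, ‖M i j‖ * ‖N i j‖ := by
        refine Finset.sum_le_sum fun i _ => Finset.sum_le_sum fun j _ => ?_
        calc (M i j * (starRingEnd ℂ) (N i j)).re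
            ≤ ‖M i j * (starRingEnd ℂ) (N i j)‖ := Complex.re_le_norm _
          _ = ‖M i j‖ * ‖N i j‖ := by
              rw [norm_mul, Complex.norm_conj]
    _ ≤ frobNorm M * frobNorm N := by
        have := Real.sum_mul_le_sqrt_mul_sqrt (Finset.univ : Finset (Fin n × Fin n))
          (fun p => ‖M p.1 p.2‖) (fun p => ‖N p.1 p.2‖)
        simpa [frobNorm, Fintype.sum_prod_type] using this

lemma trace_self {n : ℕ} (N : Matrix (Fin n) (Fin n) ℂ) (hN : N.IsHermitian) :
    ((N * N).trace).re = frobNorm N ^ 2 := by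
  rw [trace_re_eq N N hN, frobNorm, Real.sq_sqrt (by positivity)]
  refine Finset.sum_congr rfl fun i _ => Finset.sum_congr rfl fun j _ => ?_
  rw [Complex.mul_conj]
  simp [Complex.sq_norm]

lemma frobNorm_smul {n : ℕ} (c : ℝ) (M : Matrix (Fin n) (Fin n) ℂ) :
    frobNorm ((c : ℂ) • M) = |c| * frobNorm M := by
  unfold frobNorm
  rw [← Real.sqrt_sq_eq_abs, ← Real.sqrt_mul (sq_nonneg c)]
  congr 1
  rw [Finset.mul_sum]
  refine Finset.sum_congr rfl fun i _ => ?_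
  rw [Finset.mul_sum]
  refine Finset.sum_congr rfl fun j _ => ?_
  simp [Matrix.smul_apply, mul_pow, Complex.norm_real, sq_abs]

theorem robust_sar_constraint_equivalence
    (n : ℕ) (Ahat W : Matrix (Fin n) (Fin n) ℂ)
    (hA : Ahat.PosSemidef) (hW : W.PosSemidef)
    (τ : ℝ) (hτ : 0 ≤ τ) (P : ℝ) :
    (∀ Δ : Matrix (Fin n) (Fin n) ℂ, Δ.IsHermitian → frobNorm Δ ≤ τ →
        (((Ahat + Δ) * W).trace).re ≤ P) ↔
      ((Ahat * W).trace).re + τ * frobNorm W ≤ P := by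
  constructor
  · intro h
    by_cases hWz : frobNorm W = 0
    · rw [hWz, mul_zero, add_zero]
      simpa using h 0 (by simp [Matrix.IsHermitian]) (by simp [frobNorm]; positivity)
    · have hWpos : 0 < frobNorm W := lt_of_le_of_ne (frobNorm_nonneg W) (Ne.symm hWz)
      set c : ℝ := τ / frobNorm W with hc
      have hcnn : 0 ≤ c := div_nonneg hτ hWpos.le
      have hΔherm : ((c : ℂ) • W).IsHermitian := by
        unfold Matrix.IsHermitian
        rw [Matrix.conjTranspose_smul, hW.isHermitian]
        congr 1
        simp [Complex.star_def, Complex.conj_ofReal]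
      have hΔnorm : frobNorm ((c : ℂ) • W) = τ := by
        rw [frobNorm_smul, abs_of_nonneg hcnn, hc, div_mul_cancel₀ _ hWz]
      have := h ((c : ℂ) • W) hΔherm (le_of_eq hΔnorm)
      rw [Matrix.add_mul, Matrix.trace_add, Complex.add_re] at this
      have htr : ((((c : ℂ) • W) * W).trace).re = τ * frobNorm W := by
        rw [Matrix.smul_mul, Matrix.trace_smul]
        have : ((c : ℂ) • ((W * W).trace)).re = c * ((W * W).trace).re := by
          simp [Complex.smul_re]
        rw [this, trace_self W hW.isHermitian, hc]
        field_simp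
      linarith [this, htr]
  · intro h Δ hΔ hΔn
    rw [Matrix.add_mul, Matrix.trace_add, Complex.add_re]
    have hb : ((Δ * W).trace).re ≤ frobNorm Δ * frobNorm W := cs_bound Δ W hW.isHermitian
    have : frobNorm Δ * frobNorm W ≤ τ * frobNorm W :=
      mul_le_mul_of_nonneg_right hΔn (frobNorm_nonneg W)
    linarith
end
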